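/- Let κ ∈ [0,1) and x ∈ S. Then for every z ∈ [0, r(U^S_κ|x,x)), the U-function of the (S,κ)-lazy version P^S_κ = κI + (1−κ)P satisfies U^S_κ(x,x|z) = (1 − κz)·U(x,x | (1−κ)z/(1−κz)) + κz, and moreover 1/r(U^S_κ|x,x) = κ + (1−κ)/r(U|x,x). -/

import Mathlib

open scoped Classical ENNReal NNReal

variable {S : Type*}

/-- The `n`-step transition probabilities `P^n(x,y)` (n-th matrix power of `P`). -/
noncomputable def kpow (P : S → S → ℝ) : ℕ → S → S → ℝ
  | 0, x, y => if x = y then 1 else 0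
  | n+1, x, y => ∑' w, P x w * kpow P n w y

/-- `P` is a transition probability: nonnegative entries and each row sums to `1`. -/
def IsTransProb (P : S → S → ℝ) : Prop :=
  (∀ x y, 0 ≤ P x y) ∧ ∀ x, HasSum (P x) 1

/-- `P` is irreducible: for all `x, y` there is `n ≥ 0` with `P^n(x,y) > 0`. -/
def Irred (P : S → S → ℝ) : Prop :=
  ∀ x y, ∃ n, 0 < kpow P n x y

/-- The Green function `G(x,y|z) = ∑_{n ≥ 0} P^n(x,y) zⁿ`, a sum in `[0,∞]`. -/
noncomputable def green (P : S → S → ℝ) (x y : S) (z : ℝ) : ℝ≥0∞ :=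
  ∑' n, ENNReal.ofReal (kpow P n x y * z ^ n)

/-- Radius of convergence of the power series with coefficients `a`,
as the supremum (in `[0,∞]`) of the nonnegative `z` at which the series converges. -/
noncomputable def convRadius (a : ℕ → ℝ) : ℝ≥0∞ :=
  ⨆ (z : ℝ≥0) (_ : Summable fun n => a n * (z : ℝ) ^ n), (z : ℝ≥0∞)

/-- The spectral radius as an extended nonnegative real: the reciprocal of the
radius of convergence of `G(x,x|·)` (independent of `x` when `P` is irreducible). -/
noncomputable def specRadiusE (P : S → S → ℝ) : ℝ≥0∞ :=
  ⨆ x, (convRadius fun n => kpow P n x x)⁻¹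

/-- The spectral radius `ρ` of `P`. -/
noncomputable def specRadius (P : S → S → ℝ) : ℝ :=
  (specRadiusE P).toReal

/-- The `(L,κ)`-lazy version `P^L_κ` of `P`:
`P^L_κ(x,y) = κ·1_{x=y} + (1-κ)P(x,y)` for `x ∈ L`, and `P^L_κ(x,y) = P(x,y)` for `x ∉ L`. -/
noncomputable def lazy (P : S → S → ℝ) (L : Set S) (κ : ℝ) : S → S → ℝ :=
  fun x y => if x ∈ L then (if x = y then κ else 0) + (1 - κ) * P x y else P x y

/-- First-return probabilities: `u_0(x,y) = 0`, `u_1(x,y) = P(x,y)`, and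
`u_n(x,y) = ∑_{w ≠ y} P(x,w) u_{n-1}(w,y)` for `n ≥ 2`. -/
noncomputable def fret (P : S → S → ℝ) : ℕ → S → S → ℝ
  | 0, _, _ => 0
  | 1, x, y => P x y
  | n+2, x, y => ∑' w, if w = y then 0 else P x w * fret P (n+1) w y

/-- The U-function `U(x,y|z) = ∑_{n ≥ 0} u_n(x,y) zⁿ`, a sum in `[0,∞]`. -/
noncomputable def Ufun (P : S → S → ℝ) (x y : S) (z : ℝ) : ℝ≥0∞ :=
  ∑' n, ENNReal.ofReal (fret P n x y * z ^ n)

/-- `r(U|x,y)`, the radius of convergence of `U(x,y|·)`. -/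
noncomputable def rU (P : S → S → ℝ) (x y : S) : ℝ≥0∞ :=
  convRadius fun n => fret P n x y

/-- `P` is rho-recurrent if `G(x,x|1/ρ) = ∞` (for all, equivalently some, `x`). -/
def RhoRecurrent (P : S → S → ℝ) : Prop :=
  ∀ x, green P x x (specRadius P)⁻¹ = ∞

/-- `P` is rho-transient if `G(x,x|1/ρ) < ∞` (for all, equivalently some, `x`). -/
def RhoTransient (P : S → S → ℝ) : Prop :=
  ∀ x, green P x x (specRadius P)⁻¹ ≠ ∞

/-- A rho-recurrent `P` is strictly rho-recurrent if `r(U|x,x) > 1/ρ` for some `x`. -/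
def StrictlyRhoRecurrent (P : S → S → ℝ) : Prop :=
  RhoRecurrent P ∧ ∃ x, ENNReal.ofReal (specRadius P)⁻¹ < rU P x x

/-- A rho-recurrent `P` is critically rho-recurrent if `r(U|x,x) = 1/ρ` for all `x`. -/
def CriticallyRhoRecurrent (P : S → S → ℝ) : Prop :=
  RhoRecurrent P ∧ ∀ x, rU P x x = ENNReal.ofReal (specRadius P)⁻¹


/-!
A step of the lazy chain either pauses (probability `κ`) or moves according to `P`. A first
return of the lazy chain to `x` in `n + 2` steps is a first return of `P` in `k + 2` steps together
with `n - k` pauses distributed over its `k + 1` intermediate states (a pause at `x` would already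
be a return), so `u^κ_{n+2}(x,x) = ∑ₖ C(n,k) κ^(n-k) (1-κ)^(k+2) u_{k+2}(x,x)`. Summing the
negative binomial series `∑ⱼ C(j+k,k) (κz)^j = (1 - κz)^(-k-1)` turns `U^κ(x,x|z)` into
`(1 - κz) U(x,x|w) + κz` with `w = (1-κ)z/(1-κz)`. Irreducibility gives some `u_{k+2}(x,x) > 0`,
which forces `κz < 1` wherever `U^κ(x,x|·)` converges; the substitution `z ↦ w` maps `[0, 1/κ)`
onto `[0, ∞)` with `1/z = κ + (1-κ)/w`, which gives the radius formula.
-/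
open Finset

section TransProb

variable {P : S → S → ℝ}

lemma IsTransProb.le_one (hP : IsTransProb P) (x y : S) : P x y ≤ 1 :=
  le_hasSum (hP.2 x) y fun z _ => hP.1 x z

lemma IsTransProb.summable_mul (hP : IsTransProb P) (x : S) {c : S → ℝ}
    (hc : ∀ y, c y ∈ Set.Icc 0 1) : Summable fun y => P x y * c y :=
  (hP.2 x).summable.of_nonneg_of_le (fun y => mul_nonneg (hP.1 x y) (hc y).1)
    fun y => mul_le_of_le_one_right (hP.1 x y) (hc y).2

lemma IsTransProb.tsum_mul_le_one (hP : IsTransProb P) (x : S) {c : S → ℝ}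
    (hc : ∀ y, c y ∈ Set.Icc 0 1) : ∑' y, P x y * c y ≤ 1 :=
  (hP.2 x).tsum_eq ▸ (hP.summable_mul x hc).tsum_le_tsum
    (fun y => mul_le_of_le_one_right (hP.1 x y) (hc y).2) (hP.2 x).summable

lemma fret_add_two (P : S → S → ℝ) (n : ℕ) (x y : S) :
    fret P (n + 2) x y = ∑' w, P x w * (if w = y then 0 else fret P (n + 1) w y) := by
  simp only [fret, mul_ite, mul_zero]

lemma fret_mem_Icc (hP : IsTransProb P) : ∀ (n : ℕ) (x y : S), fret P n x y ∈ Set.Icc 0 1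
  | 0, _, _ => by simp [fret]
  | 1, x, y => ⟨hP.1 x y, hP.le_one x y⟩
  | n + 2, x, y => by
    have hc : ∀ w, (if w = y then 0 else fret P (n + 1) w y) ∈ Set.Icc 0 1 := fun w => by
      split_ifs
      · simp
      · exact fret_mem_Icc hP (n + 1) w y
    rw [fret_add_two]
    exact ⟨tsum_nonneg fun w => mul_nonneg (hP.1 x w) (hc w).1, hP.tsum_mul_le_one x hc⟩

lemma ite_fret_mem_Icc (hP : IsTransProb P) (n : ℕ) (w y : S) :
    (if w = y then 0 else fret P n w y) ∈ Set.Icc 0 1 := by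
  split_ifs
  · simp
  · exact fret_mem_Icc hP n w y

lemma lazy_univ_apply (P : S → S → ℝ) (κ : ℝ) (x y : S) :
    lazy P Set.univ κ x y = (if x = y then κ else 0) + (1 - κ) * P x y := by
  simp [lazy]

lemma hasSum_lazy_mul (hP : IsTransProb P) {κ : ℝ} (x : S) {c : S → ℝ}
    (hc : ∀ y, c y ∈ Set.Icc 0 1) :
    HasSum (fun y => lazy P Set.univ κ x y * c y) (κ * c x + (1 - κ) * ∑' y, P x y * c y) := by
  convert (hasSum_ite_eq x (κ * c x)).add ((hP.summable_mul x hc).hasSum.mul_left (1 - κ))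
    using 1
  ext y
  rw [lazy_univ_apply]
  rcases eq_or_ne x y with rfl | hxy
  · simp only [↓reduceIte]; ring
  · simp only [hxy, Ne.symm hxy, ↓reduceIte, zero_add]; ring

lemma lazy_isTransProb (hP : IsTransProb P) {κ : ℝ} (hκ : κ ∈ Set.Icc 0 1) :
    IsTransProb (lazy P Set.univ κ) := by
  refine ⟨fun x y => ?_, fun x => ?_⟩
  · rw [lazy_univ_apply]
    have := hP.1 x y
    split_ifs <;> nlinarith [hκ.1, hκ.2]
  · simpa [(hP.2 x).tsum_eq] using hasSum_lazy_mul hP (κ := κ) x (c := fun _ => 1) (by simp)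

end TransProb

section BinomTransform

def binomTransform (κ : ℝ) (g : ℕ → ℝ) (n : ℕ) : ℝ :=
  ∑ p ∈ antidiagonal n, (n.choose p.1 : ℝ) * κ ^ p.2 * g p.1

variable {κ : ℝ} {g : ℕ → ℝ}

lemma binomTransform_succ (κ : ℝ) (g : ℕ → ℝ) (n : ℕ) :
    binomTransform κ g (n + 1) =
      κ * binomTransform κ g n + binomTransform κ (fun k => g (k + 1)) n := by
  simp only [binomTransform, mul_assoc]
  rw [sum_antidiagonal_choose_succ_mul (fun i j => κ ^ j * g i), mul_sum]
  congr 1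
  · exact sum_congr rfl fun p _ => by ring
  · refine sum_congr rfl fun p hp => ?_
    rw [Nat.choose_symm_of_eq_add (mem_antidiagonal.1 hp).symm]

lemma binomTransform_const_mul (κ a : ℝ) (g : ℕ → ℝ) (n : ℕ) :
    binomTransform κ (fun k => a * g k) n = a * binomTransform κ g n := by
  simp only [binomTransform, mul_sum]
  exact sum_congr rfl fun p _ => by ring

lemma binomTransform_nonneg (hκ : 0 ≤ κ) (hg : ∀ k, 0 ≤ g k) (n : ℕ) :
    0 ≤ binomTransform κ g n :=
  sum_nonneg fun p _ => by have := hg p.1; positivity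

lemma tsum_mul_binomTransform {ι : Type*} {f : ι → ℝ} {g : ι → ℕ → ℝ} (n : ℕ)
    (hs : ∀ k, Summable fun i => f i * g i k) :
    ∑' i, f i * binomTransform κ (g i) n = binomTransform κ (fun k => ∑' i, f i * g i k) n := by
  simp only [binomTransform, mul_sum]
  rw [Summable.tsum_finsetSum fun p _ => ((hs p.1).mul_left ((n.choose p.1 : ℝ) * κ ^ p.2)).congr
    fun i => by ring]
  refine sum_congr rfl fun p _ => ?_
  rw [← tsum_mul_left]
  exact tsum_congr fun i => by ring

lemma choose_mul_pow_le_binomTransform (hκ : 0 ≤ κ) (hg : ∀ k, 0 ≤ g k) {k n : ℕ} (hkn : k ≤ n) :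
    (n.choose k : ℝ) * κ ^ (n - k) * g k ≤ binomTransform κ g n :=
  single_le_sum (f := fun p => (n.choose p.1 : ℝ) * κ ^ p.2 * g p.1) (a := (k, n - k))
    (fun p _ => by have := hg p.1; positivity) (mem_antidiagonal.2 (Nat.add_sub_cancel' hkn))

lemma ENNReal.tsum_sum_antidiagonal (f : ℕ × ℕ → ℝ≥0∞) :
    ∑' n, ∑ p ∈ antidiagonal n, f p = ∑' p, f p := by
  rw [← HasAntidiagonal.sigmaAntidiagonalEquivProd.tsum_eq, ENNReal.tsum_sigma']
  exact tsum_congr fun n => (Finset.tsum_subtype (antidiagonal n) f).symm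

lemma tsum_ofReal_binomTransform_mul_pow (hκ : 0 ≤ κ) (hg : ∀ k, 0 ≤ g k) {z : ℝ}
    (hz : 0 ≤ z) (hκz : κ * z < 1) :
    ∑' n, ENNReal.ofReal (binomTransform κ g n * z ^ n) =
      ∑' k, ENNReal.ofReal (g k * z ^ k / (1 - κ * z) ^ (k + 1)) := by
  have hκz0 : 0 ≤ κ * z := mul_nonneg hκ hz
  have hgeom (k : ℕ) : ∑' j, ENNReal.ofReal (((j + k).choose k : ℝ) * (κ * z) ^ j) =
      ENNReal.ofReal (1 / (1 - κ * z) ^ (k + 1)) := by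
    have hnorm : ‖κ * z‖ < 1 := by rwa [Real.norm_of_nonneg hκz0]
    rw [← tsum_choose_mul_geometric_of_norm_lt_one k hnorm, ENNReal.ofReal_tsum_of_nonneg
      (fun j => by positivity) (summable_choose_mul_geometric_of_norm_lt_one k hnorm)]
  calc ∑' n, ENNReal.ofReal (binomTransform κ g n * z ^ n)
      = ∑' n, ∑ p ∈ antidiagonal n, ENNReal.ofReal
          (((p.1 + p.2).choose p.1 : ℝ) * (κ * z) ^ p.2 * (g p.1 * z ^ p.1)) := by
        refine tsum_congr fun n => ?_
        rw [binomTransform, sum_mul, ENNReal.ofReal_sum_of_nonneg fun p _ => by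
          have := hg p.1; positivity]
        refine sum_congr rfl fun p hp => ?_
        rw [← mem_antidiagonal.1 hp]
        ring_nf
    _ = ∑' k, ∑' j, ENNReal.ofReal (((j + k).choose k : ℝ) * (κ * z) ^ j) *
          ENNReal.ofReal (g k * z ^ k) := by
        rw [ENNReal.tsum_sum_antidiagonal, ENNReal.tsum_prod']
        refine tsum_congr fun k => tsum_congr fun j => ?_
        rw [← ENNReal.ofReal_mul (by positivity), add_comm j]
    _ = ∑' k, ENNReal.ofReal (g k * z ^ k / (1 - κ * z) ^ (k + 1)) := by
        refine tsum_congr fun k => ?_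
        rw [ENNReal.tsum_mul_right, hgeom, ← ENNReal.ofReal_mul (by positivity)]
        ring_nf

lemma mul_lt_one_of_summable_binomTransform (hκ : 0 ≤ κ)
    (hg : ∀ k, 0 ≤ g k) {k₀ : ℕ} (hk₀ : 0 < g k₀) {z : ℝ} (hz : 0 ≤ z)
    (hs : Summable fun n => binomTransform κ g n * z ^ n) : κ * z < 1 := by
  by_contra! hκz
  have hz0 : 0 < z := lt_of_le_of_ne hz fun h => by norm_num [← h] at hκz
  have hbound (n : ℕ) (hn : k₀ ≤ n) : g k₀ * z ^ k₀ ≤ binomTransform κ g n * z ^ n := calc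
    g k₀ * z ^ k₀ ≤ (n.choose k₀ : ℝ) * (κ * z) ^ (n - k₀) * (g k₀ * z ^ k₀) := by
      refine le_mul_of_one_le_left (by positivity) (one_le_mul_of_one_le_of_one_le ?_ ?_)
      · exact_mod_cast Nat.choose_pos hn
      · exact one_le_pow₀ hκz
    _ = (n.choose k₀ : ℝ) * κ ^ (n - k₀) * g k₀ * z ^ n := by
      rw [mul_pow, ← Nat.sub_add_cancel hn, pow_add z, Nat.add_sub_cancel]
      ring
    _ ≤ binomTransform κ g n * z ^ n := by
      gcongr
      exact choose_mul_pow_le_binomTransform hκ hg hn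
  have hpos : 0 < g k₀ * z ^ k₀ := by positivity
  obtain ⟨n, hn, hkn⟩ :=
    ((hs.tendsto_atTop_zero.eventually_lt_const hpos).and (Filter.eventually_ge_atTop k₀)).exists
  exact (hbound n hkn).not_gt hn

end BinomTransform

section LazyFirstReturn

variable {P : S → S → ℝ} {κ : ℝ}

lemma tsum_mul_ite_fret_lazy (hP : IsTransProb P) {x : S} {n : ℕ}
    (ih : ∀ v, v ≠ x → fret (lazy P Set.univ κ) (n + 1) v x =
      binomTransform κ (fun k => (1 - κ) ^ (k + 1) * fret P (k + 1) v x) n) (w : S) :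
    ∑' v, P w v * (if v = x then 0 else fret (lazy P Set.univ κ) (n + 1) v x) =
      binomTransform κ (fun k => (1 - κ) ^ (k + 1) * fret P (k + 2) w x) n := by
  have hite (v : S) : (if v = x then 0 else fret (lazy P Set.univ κ) (n + 1) v x) =
      binomTransform κ (fun k => (1 - κ) ^ (k + 1) * (if v = x then 0 else fret P (k + 1) v x))
        n := by
    split_ifs with hv
    · simp [binomTransform]
    · exact ih v hv
  simp_rw [hite]
  rw [tsum_mul_binomTransform]
  · congr 1
    ext k
    rw [fret_add_two, ← tsum_mul_left]
    exact tsum_congr fun v => by ring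
  · intro k
    exact ((hP.summable_mul w (ite_fret_mem_Icc hP (k + 1) · x)).mul_left ((1 - κ) ^ (k + 1))).congr
      fun v => by ring

lemma fret_lazy_add_two (hP : IsTransProb P) (hκ : κ ∈ Set.Icc 0 1) (n : ℕ) (w x : S) :
    fret (lazy P Set.univ κ) (n + 2) w x =
      κ * (if w = x then 0 else fret (lazy P Set.univ κ) (n + 1) w x) +
        (1 - κ) * ∑' v, P w v * (if v = x then 0 else fret (lazy P Set.univ κ) (n + 1) v x) :=
  (fret_add_two _ n w x).trans
    (hasSum_lazy_mul hP w (ite_fret_mem_Icc (lazy_isTransProb hP hκ) (n + 1) · x)).tsum_eq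

lemma fret_lazy_of_ne (hP : IsTransProb P) (hκ : κ ∈ Set.Icc 0 1) (x : S) (n : ℕ) :
    ∀ w, w ≠ x → fret (lazy P Set.univ κ) (n + 1) w x =
      binomTransform κ (fun k => (1 - κ) ^ (k + 1) * fret P (k + 1) w x) n := by
  induction n with
  | zero =>
    intro w hw
    simp [fret, binomTransform, lazy_univ_apply, hw]
  | succ n ih =>
    intro w hw
    rw [fret_lazy_add_two hP hκ, if_neg hw, ih w hw, tsum_mul_ite_fret_lazy hP ih,
      ← binomTransform_const_mul κ (1 - κ), binomTransform_succ]
    congr! 3 with k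
    ring

lemma fret_lazy_self (hP : IsTransProb P) (hκ : κ ∈ Set.Icc 0 1) (x : S) (n : ℕ) :
    fret (lazy P Set.univ κ) (n + 2) x x =
      binomTransform κ (fun k => (1 - κ) ^ (k + 2) * fret P (k + 2) x x) n := by
  rw [fret_lazy_add_two hP hκ, if_pos rfl, mul_zero, zero_add,
    tsum_mul_ite_fret_lazy hP (fret_lazy_of_ne hP hκ x n), ← binomTransform_const_mul]
  congr! 2 with k
  ring

end LazyFirstReturn

section GeneratingFunction

variable {P : S → S → ℝ} {κ : ℝ}

lemma Ufun_eq_add_tsum (P : S → S → ℝ) (x y : S) (z : ℝ) :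
    Ufun P x y z = ENNReal.ofReal (P x y * z) +
      ∑' n, ENNReal.ofReal (fret P (n + 2) x y * z ^ (n + 2)) := by
  rw [Ufun, tsum_eq_zero_add' ENNReal.summable, tsum_eq_zero_add' ENNReal.summable]
  simp [fret]

lemma Ufun_lazy (hP : IsTransProb P) (hκ : κ ∈ Set.Ico 0 1) (x : S) {z : ℝ} (hz : 0 ≤ z)
    (hκz : κ * z < 1) :
    Ufun (lazy P Set.univ κ) x x z =
      ENNReal.ofReal (1 - κ * z) * Ufun P x x ((1 - κ) * z / (1 - κ * z)) +
        ENNReal.ofReal (κ * z) := by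
  obtain ⟨hκ0, hκ1⟩ := hκ
  have hd : 0 < 1 - κ * z := by linarith
  have hu (n : ℕ) : 0 ≤ fret P n x x := (fret_mem_Icc hP n x x).1
  have hhead : ENNReal.ofReal (lazy P Set.univ κ x x * z) =
      ENNReal.ofReal (1 - κ * z) * ENNReal.ofReal (P x x * ((1 - κ) * z / (1 - κ * z))) +
        ENNReal.ofReal (κ * z) := by
    rw [← ENNReal.ofReal_mul hd.le, ← ENNReal.ofReal_add (by have := hP.1 x x; positivity)
      (by positivity), lazy_univ_apply, if_pos rfl]
    congr 1
    field_simp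
    ring
  have htail : ∑' n, ENNReal.ofReal (fret (lazy P Set.univ κ) (n + 2) x x * z ^ (n + 2)) =
      ∑' n, ENNReal.ofReal (1 - κ * z) *
        ENNReal.ofReal (fret P (n + 2) x x * ((1 - κ) * z / (1 - κ * z)) ^ (n + 2)) := by
    have hsplit (n : ℕ) : ENNReal.ofReal (fret (lazy P Set.univ κ) (n + 2) x x * z ^ (n + 2)) =
        ENNReal.ofReal (binomTransform κ (fun k => (1 - κ) ^ (k + 2) * fret P (k + 2) x x) n *
          z ^ n) * ENNReal.ofReal (z ^ 2) := by
      rw [fret_lazy_self hP ⟨hκ0, hκ1.le⟩, ← ENNReal.ofReal_mul (mul_nonneg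
        (binomTransform_nonneg hκ0 (fun k => by have := hu (k + 2); positivity) _)
        (pow_nonneg hz _)), pow_add, mul_assoc]
    rw [tsum_congr hsplit, ENNReal.tsum_mul_right, tsum_ofReal_binomTransform_mul_pow hκ0
      (fun k => by have := hu (k + 2); positivity) hz hκz, ← ENNReal.tsum_mul_right]
    refine tsum_congr fun n => ?_
    rw [← ENNReal.ofReal_mul (by have := hu (n + 2); positivity),
      ← ENNReal.ofReal_mul hd.le, div_pow, mul_pow]
    congr 1
    field_simp
    ring
  rw [Ufun_eq_add_tsum, Ufun_eq_add_tsum, hhead, htail, ENNReal.tsum_mul_left]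
  ring

end GeneratingFunction

section Positivity

variable {P : S → S → ℝ}

lemma exists_pos_and_kpow_pos_of_kpow_succ_pos (hP : IsTransProb P) {n : ℕ} {x y : S}
    (h : 0 < kpow P (n + 1) x y) : ∃ w, 0 < P x w ∧ 0 < kpow P n w y := by
  rw [kpow] at h
  by_contra! hne
  refine h.not_ge (tsum_nonpos fun w => ?_)
  rcases (hP.1 x w).eq_or_lt with hw | hw
  · rw [← hw, zero_mul]
  · exact mul_nonpos_of_nonneg_of_nonpos hw.le (hne w hw)

lemma mul_fret_le_fret_add_two (hP : IsTransProb P) {w y : S} (hw : w ≠ y) (x : S) (n : ℕ) :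
    P x w * fret P (n + 1) w y ≤ fret P (n + 2) x y := by
  rw [fret_add_two]
  simpa [hw] using (hP.summable_mul x (ite_fret_mem_Icc hP (n + 1) · y)).le_tsum w
    fun v _ => mul_nonneg (hP.1 x v) (ite_fret_mem_Icc hP (n + 1) v y).1

lemma exists_fret_pos_of_kpow_pos (hP : IsTransProb P) {x : S} (n : ℕ) :
    ∀ w, w ≠ x → 0 < kpow P n w x → ∃ j, 0 < fret P (j + 1) w x := by
  induction n with
  | zero => intro w hw h; simp [kpow, hw] at h
  | succ n ih =>
    intro w hw h
    obtain ⟨v, hwv, hvx⟩ := exists_pos_and_kpow_pos_of_kpow_succ_pos hP h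
    by_cases hv : v = x
    · exact ⟨0, by rwa [fret, ← hv]⟩
    · obtain ⟨j, hj⟩ := ih v hv hvx
      exact ⟨j + 1, (mul_pos hwv hj).trans_le (mul_fret_le_fret_add_two hP hv w j)⟩

lemma exists_ne_and_pos_of_kpow_pos (hP : IsTransProb P) {x y : S} (hxy : y ≠ x) (n : ℕ)
    (h : 0 < kpow P n x y) : ∃ w, w ≠ x ∧ 0 < P x w := by
  induction n with
  | zero => simp [kpow, hxy.symm] at h
  | succ n ih =>
    obtain ⟨v, hxv, hvy⟩ := exists_pos_and_kpow_pos_of_kpow_succ_pos hP h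
    by_cases hv : v = x
    · exact ih (hv ▸ hvy)
    · exact ⟨v, hv, hxv⟩

lemma exists_fret_add_two_pos [Nontrivial S] (hP : IsTransProb P) (hirr : Irred P) (x : S) :
    ∃ k, 0 < fret P (k + 2) x x := by
  obtain ⟨y, hy⟩ := exists_ne x
  obtain ⟨a, ha⟩ := hirr x y
  obtain ⟨w, hw, hxw⟩ := exists_ne_and_pos_of_kpow_pos hP hy a ha
  obtain ⟨c, hc⟩ := hirr w x
  obtain ⟨j, hj⟩ := exists_fret_pos_of_kpow_pos hP c w hw hc
  exact ⟨j, (mul_pos hxw hj).trans_le (mul_fret_le_fret_add_two hP hw x j)⟩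

end Positivity

section Radius

variable {κ : ℝ}

lemma summable_iff_tsum_ofReal_ne_top {ι : Type*} {f : ι → ℝ} (hf : ∀ i, 0 ≤ f i) :
    Summable f ↔ ∑' i, ENNReal.ofReal (f i) ≠ ∞ :=
  ⟨Summable.tsum_ofReal_ne_top, fun h =>
    (ENNReal.summable_toReal h).congr fun i => ENNReal.toReal_ofReal (hf i)⟩

lemma ofReal_le_convRadius {a : ℕ → ℝ} {z : ℝ} (hz : 0 ≤ z)
    (hs : Summable fun n => a n * z ^ n) : ENNReal.ofReal z ≤ convRadius a :=
  le_iSup₂_of_le (f := fun (w : ℝ≥0) (_ : Summable fun n => a n * (w : ℝ) ^ n) => (w : ℝ≥0∞))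
    z.toNNReal (by rwa [Real.coe_toNNReal z hz]) le_rfl

lemma exists_summable_of_ofReal_lt_convRadius {a : ℕ → ℝ} {z : ℝ}
    (h : ENNReal.ofReal z < convRadius a) : ∃ w : ℝ, z < w ∧ Summable fun n => a n * w ^ n := by
  obtain ⟨w, hs, hzw⟩ := lt_biSup_iff.1 h
  rw [← ENNReal.ofReal_coe_nnreal, ENNReal.ofReal_lt_ofReal_iff'] at hzw
  exact ⟨w, hzw.1, hs⟩

lemma inv_convRadius (a : ℕ → ℝ) :
    (convRadius a)⁻¹ = ⨅ (w : ℝ≥0) (_ : Summable fun n => a n * (w : ℝ) ^ n), (w : ℝ≥0∞)⁻¹ := by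
  simp only [convRadius, ENNReal.inv_iSup]

lemma moebius_surjOn (hκ : κ ∈ Set.Ico 0 1) :
    Set.SurjOn (fun z => (1 - κ) * z / (1 - κ * z)) {z | 0 ≤ z ∧ κ * z < 1} (Set.Ici 0) := by
  intro w (hw : 0 ≤ w)
  have hd : 0 < 1 - κ + κ * w := by nlinarith [hκ.1, hκ.2]
  refine ⟨w / (1 - κ + κ * w), ⟨by positivity, ?_⟩, ?_⟩
  · rw [mul_div_assoc', div_lt_one hd]
    linarith [hκ.2]
  · have : 1 - κ * (w / (1 - κ + κ * w)) = (1 - κ) / (1 - κ + κ * w) := by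
      field_simp
      ring
    simp only [this]
    field_simp [show 1 - κ ≠ 0 by linarith [hκ.2]]

lemma inv_ofReal_eq_moebius (hκ : κ ∈ Set.Ico 0 1) {z : ℝ} (hz : 0 ≤ z) (hκz : κ * z < 1) :
    (ENNReal.ofReal z)⁻¹ = ENNReal.ofReal κ +
      ENNReal.ofReal (1 - κ) * (ENNReal.ofReal ((1 - κ) * z / (1 - κ * z)))⁻¹ := by
  obtain ⟨hκ0, hκ1⟩ := hκ
  have h1κ : 0 < 1 - κ := by linarith
  rcases hz.eq_or_lt with rfl | hz
  · rw [ENNReal.ofReal_zero, ENNReal.inv_zero, mul_zero, zero_div, ENNReal.ofReal_zero,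
      ENNReal.inv_zero, ENNReal.mul_top (by simpa using h1κ), add_top]
  have hd : 0 < 1 - κ * z := by linarith
  rw [← ENNReal.ofReal_inv_of_pos hz, ← ENNReal.ofReal_inv_of_pos (by positivity),
    ← ENNReal.ofReal_mul h1κ.le, ← ENNReal.ofReal_add hκ0 (by positivity)]
  congr 1
  field_simp
  ring

lemma inv_convRadius_eq_of_summable_iff {a b : ℕ → ℝ} (hκ : κ ∈ Set.Ico 0 1)
    (h : ∀ z : ℝ, 0 ≤ z → ((Summable fun n => b n * z ^ n) ↔
      κ * z < 1 ∧ Summable fun n => a n * ((1 - κ) * z / (1 - κ * z)) ^ n)) :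
    (convRadius b)⁻¹ = ENNReal.ofReal κ + ENNReal.ofReal (1 - κ) * (convRadius a)⁻¹ := by
  have hc : ENNReal.ofReal (1 - κ) ≠ 0 := by simpa using hκ.2
  refine le_antisymm ?_ ?_
  · rw [inv_convRadius a, ENNReal.mul_iInf_of_ne hc ENNReal.ofReal_ne_top, ENNReal.add_iInf]
    refine le_iInf fun (w : ℝ≥0) => ?_
    rw [ENNReal.mul_iInf_of_ne hc ENNReal.ofReal_ne_top, ENNReal.add_iInf]
    refine le_iInf fun hw => ?_
    obtain ⟨z, ⟨hz, hκz⟩, hzw⟩ := moebius_surjOn hκ (Set.mem_Ici.2 w.coe_nonneg)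
    dsimp only at hzw
    calc (convRadius b)⁻¹ ≤ (ENNReal.ofReal z)⁻¹ :=
          ENNReal.inv_le_inv.2 (ofReal_le_convRadius hz ((h z hz).2 ⟨hκz, hzw ▸ hw⟩))
      _ = _ := by rw [inv_ofReal_eq_moebius hκ hz hκz, hzw, ENNReal.ofReal_coe_nnreal]
  · rw [inv_convRadius b]
    refine le_iInf₂ fun z hs => ?_
    obtain ⟨hκz, ha⟩ := (h z z.coe_nonneg).1 hs
    calc _ ≤ ENNReal.ofReal κ + ENNReal.ofReal (1 - κ) *
          (ENNReal.ofReal ((1 - κ) * z / (1 - κ * z)))⁻¹ := by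
          gcongr
          exact ofReal_le_convRadius (div_nonneg (mul_nonneg (by linarith [hκ.2]) z.coe_nonneg)
            (by linarith)) ha
      _ = (ENNReal.ofReal z)⁻¹ := (inv_ofReal_eq_moebius hκ z.coe_nonneg hκz).symm
      _ = (z : ℝ≥0∞)⁻¹ := by rw [ENNReal.ofReal_coe_nnreal]

end Radius

section LazyRadius

variable {P : S → S → ℝ} {κ : ℝ}

lemma summable_fret_iff_Ufun_ne_top (hP : IsTransProb P) (x y : S) {z : ℝ} (hz : 0 ≤ z) :
    (Summable fun n => fret P n x y * z ^ n) ↔ Ufun P x y z ≠ ∞ :=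
  summable_iff_tsum_ofReal_ne_top fun n => mul_nonneg (fret_mem_Icc hP n x y).1 (pow_nonneg hz n)

lemma mul_lt_one_of_summable_fret_lazy [Nontrivial S] (hP : IsTransProb P) (hirr : Irred P)
    (hκ : κ ∈ Set.Ico 0 1) (x : S) {z : ℝ} (hz : 0 ≤ z)
    (hs : Summable fun n => fret (lazy P Set.univ κ) n x x * z ^ n) : κ * z < 1 := by
  rcases hz.eq_or_lt with rfl | hz
  · simp
  obtain ⟨k₀, hk₀⟩ := exists_fret_add_two_pos hP hirr x
  have h1κ : 0 < 1 - κ := by linarith [hκ.2]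
  have hs' : Summable fun n =>
      binomTransform κ (fun k => (1 - κ) ^ (k + 2) * fret P (k + 2) x x) n * z ^ n := by
    refine (((summable_nat_add_iff 2).2 hs).div_const (z ^ 2)).congr fun n => ?_
    rw [fret_lazy_self hP ⟨hκ.1, hκ.2.le⟩, pow_add]
    field_simp
  refine mul_lt_one_of_summable_binomTransform hκ.1 (fun k => ?_) (k₀ := k₀) ?_ hz.le hs'
  · exact mul_nonneg (pow_nonneg h1κ.le _) (fret_mem_Icc hP _ x x).1
  · exact mul_pos (pow_pos h1κ _) hk₀

lemma summable_fret_lazy_iff [Nontrivial S] (hP : IsTransProb P) (hirr : Irred P)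
    (hκ : κ ∈ Set.Ico 0 1) (x : S) {z : ℝ} (hz : 0 ≤ z) :
    (Summable fun n => fret (lazy P Set.univ κ) n x x * z ^ n) ↔
      κ * z < 1 ∧ Summable fun n => fret P n x x * ((1 - κ) * z / (1 - κ * z)) ^ n := by
  by_cases hκz : κ * z < 1
  · have hd : 0 < 1 - κ * z := by linarith
    have hw : 0 ≤ (1 - κ) * z / (1 - κ * z) :=
      div_nonneg (mul_nonneg (by linarith [hκ.2]) hz) hd.le
    rw [summable_fret_iff_Ufun_ne_top (lazy_isTransProb hP ⟨hκ.1, hκ.2.le⟩) x x hz,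
      summable_fret_iff_Ufun_ne_top hP x x hw, Ufun_lazy hP hκ x hz hκz]
    simp [hκz, ENNReal.mul_eq_top]
  · exact iff_of_false (fun hs => hκz (mul_lt_one_of_summable_fret_lazy hP hirr hκ x hz hs))
      fun h => hκz h.1

end LazyRadius

theorem Ufun_global_lazy_general {S : Type*} [Infinite S] (P : S → S → ℝ)
    (hP : IsTransProb P) (hirr : Irred P)
    (κ : ℝ) (hκ : κ ∈ Set.Ico (0 : ℝ) 1) (x : S) :
    (∀ z : ℝ, 0 ≤ z → ENNReal.ofReal z < rU (lazy P Set.univ κ) x x →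
      Ufun (lazy P Set.univ κ) x x z =
        ENNReal.ofReal (1 - κ * z) * Ufun P x x ((1 - κ) * z / (1 - κ * z)) +
          ENNReal.ofReal (κ * z)) ∧
    (rU (lazy P Set.univ κ) x x)⁻¹ =
      ENNReal.ofReal κ + ENNReal.ofReal (1 - κ) * (rU P x x)⁻¹ := by
  refine ⟨fun z hz hzr => ?_, inv_convRadius_eq_of_summable_iff hκ fun z hz =>
    summable_fret_lazy_iff hP hirr hκ x hz⟩
  obtain ⟨w, hzw, hs⟩ := exists_summable_of_ofReal_lt_convRadius hzr
  have hκw := mul_lt_one_of_summable_fret_lazy hP hirr hκ x (hz.trans hzw.le) hs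
  exact Ufun_lazy hP hκ x hz ((mul_le_mul_of_nonneg_left hzw.le hκ.1).trans_lt hκw)

theorem Ufun_global_lazy {S : Type*} [Countable S] [Infinite S] (P : S → S → ℝ)
    (hP : IsTransProb P) (hirr : Irred P)
    (κ : ℝ) (hκ : κ ∈ Set.Ico (0 : ℝ) 1) (x : S) :
    (∀ z : ℝ, 0 ≤ z → ENNReal.ofReal z < rU (lazy P Set.univ κ) x x →
      Ufun (lazy P Set.univ κ) x x z =
        ENNReal.ofReal (1 - κ * z) * Ufun P x x ((1 - κ) * z / (1 - κ * z)) +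
          ENNReal.ofReal (κ * z)) ∧
    (rU (lazy P Set.univ κ) x x)⁻¹ =
      ENNReal.ofReal κ + ENNReal.ofReal (1 - κ) * (rU P x x)⁻¹ :=
  Ufun_global_lazy_general P hP hirr κ hκ x
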